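/- Let (A,I) be a finite independence alphabet and let φ be an endomorphism of the trace monoid M(A,I) satisfying: for all letters a,b,c ∈ A, if c is a prefix of φ(b) and c ∼_I φ(a), then (a,b) ∈ I. If w_{B₁}⋯w_{B_p} is a Foata normal form and k ≤ p, then r(φ(w_{B₁}⋯w_{B_k}), φ(w_{B₁}⋯w_{B_p})) ≥ k, where r measures the length of the longest common prefix of Foata normal forms. -/

import Mathlib

/-- The defining relation of the trace monoid: `ab = ba` whenever `(a,b) ∈ I`. -/
def traceRel (A : Type) (I : A → A → Prop) : FreeMonoid A → FreeMonoid A → Prop :=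
  fun x y => ∃ a b : A, I a b ∧ x = FreeMonoid.of a * FreeMonoid.of b ∧
    y = FreeMonoid.of b * FreeMonoid.of a

/-- The congruence on the free monoid generated by the trace relations. -/
def traceCon (A : Type) (I : A → A → Prop) : Con (FreeMonoid A) :=
  conGen (traceRel A I)

/-- The trace monoid `M(A,I)`, the quotient of the free monoid on `A` by the
congruence generated by `{(ab, ba) : (a,b) ∈ I}`. -/
abbrev TraceMonoid (A : Type) (I : A → A → Prop) := (traceCon A I).Quotient



/-- The image in the trace monoid of a letter `a ∈ A`. -/
def traceOf (A : Type) (I : A → A → Prop) (a : A) : TraceMonoid A I :=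
  (traceCon A I).mk' (FreeMonoid.of a)

/-- The set of letters which are periodic points of the endomorphism `φ`. -/
def perLetters (A : Type) (I : A → A → Prop) (φ : Monoid.End (TraceMonoid A I)) : Set A :=
  {a : A | ∃ n : ℕ, 1 ≤ n ∧ (φ ^ n) (traceOf A I a) = traceOf A I a}

/-- A clique of the independence graph: a nonempty set of letters that pairwise
commute (are pairwise independent). -/
def IsClique (A : Type) (I : A → A → Prop) (B : Finset A) : Prop :=
  B.Nonempty ∧ ∀ a ∈ B, ∀ b ∈ B, a ≠ b → I a b

/-- `w_B`: the product in the trace monoid of all letters of `B`. -/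
noncomputable def wB (A : Type) (I : A → A → Prop) (B : Finset A) : TraceMonoid A I :=
  (B.toList.map (traceOf A I)).prod

/-- The product `w_{B₁} ⋯ w_{B_k}` associated with a list of cliques. -/
noncomputable def wProd (A : Type) (I : A → A → Prop) (L : List (Finset A)) :
    TraceMonoid A I :=
  (L.map (wB A I)).prod

/-- A list `[B₁, …, B_k]` is a Foata chain if each `B_i` is a clique and, for every
`i ≥ 2` and every `a ∈ B_i`, there is some `b ∈ B_{i-1}` with `(a,b) ∉ I`. -/
def IsFoataChain (A : Type) (I : A → A → Prop) (L : List (Finset A)) : Prop :=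
  (∀ B ∈ L, IsClique A I B) ∧
    ∀ i : ℕ, (hi : i + 1 < L.length) →
      ∀ a ∈ L[i + 1], ∃ b ∈ L[i], ¬ I a b

/-- `[B₁, …, B_k]` is the Foata normal form of `u` if it is a Foata chain whose
product is `u`. (Such a list exists and is unique for every `u`.) -/
def IsFNF (A : Type) (I : A → A → Prop) (L : List (Finset A)) (u : TraceMonoid A I) :
    Prop :=
  IsFoataChain A I L ∧ u = wProd A I L

/-- For `u ≠ v`, `rNat u v` is the largest `k` such that the Foata normal forms of
`u` and `v` have the same first `k` components. -/
noncomputable def rNat (A : Type) (I : A → A → Prop) (u v : TraceMonoid A I) : ℕ :=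
  sSup {k : ℕ | ∃ P Lu Lv : List (Finset A), P.length = k ∧
    IsFNF A I (P ++ Lu) u ∧ IsFNF A I (P ++ Lv) v}

open Classical

/-- `r(u,v) ∈ ℕ ∪ {∞}`: the length of the longest common prefix of the Foata normal
forms of `u` and `v`, with `r(u,u) = ∞`. -/
noncomputable def rE (A : Type) (I : A → A → Prop) (u v : TraceMonoid A I) : ℕ∞ :=
  if u = v then ⊤ else (rNat A I u v : ℕ∞)

/-- The Foata normal form metric: `d(u,v) = 2^{-r(u,v)}`, with `2^{-∞} = 0`. -/
noncomputable def dFNF (A : Type) (I : A → A → Prop) (u v : TraceMonoid A I) : ℝ :=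
  if u = v then 0 else (2 : ℝ) ^ (-(rNat A I u v : ℤ))

/-- The content of a trace: the set of letters occurring in (any representative of) it. -/
def content (A : Type) (I : A → A → Prop) (u : TraceMonoid A I) : Set A :=
  {a : A | ∃ w : FreeMonoid A, (traceCon A I).mk' w = u ∧ a ∈ FreeMonoid.toList w}

/-!
The Foata normal form of a trace is computed by inserting its letters one at a time into a
stack of cliques, each letter joining the block just above the highest block that contains a
letter it does not commute with. Insert `φ(w_{B₁})`, `φ(w_{B₂})`, … in turn, each `φ(a)` through
some word representing it. Counting the bottom block as level `1`, every letter coming from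
`φ(w_{B_i})` lands at level `≥ i`: it either depends on an earlier letter of the same word
`φ(a)`, or it can be moved to the front of `φ(a)`, and then the hypothesis on `φ`, applied to
some `b ∈ B_{i-1}` that `a` depends on, yields a letter of `φ(b)`, at level `≥ i - 1`, on which
it depends. So the bottom `k` blocks are final once
`φ(w_{B₁} ⋯ w_{B_k})` has been inserted. If at that point there are fewer than `k` blocks, then
`φ` erases `B_k`, hence by the same hypothesis everything after it, and the two images coincide.
-/

namespace TraceMonoid

variable {A : Type} {I : A → A → Prop}

local notation "ι" => traceOf A I

theorem commute_traceOf {a b : A} (h : I a b) : Commute (ι a) (ι b) :=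
  (Con.eq _).2 (ConGen.Rel.of _ _ ⟨a, b, h, rfl, rfl⟩)

theorem mk'_eq_prod_map (w : FreeMonoid A) :
    (traceCon A I).mk' w = (w.toList.map ι).prod := by
  induction w using FreeMonoid.recOn with
  | one => simp
  | of_mul x w ih => rw [map_mul, ih]; simp [traceOf]

theorem exists_prod_map_eq (u : TraceMonoid A I) : ∃ w : List A, (w.map ι).prod = u := by
  obtain ⟨w, rfl⟩ := Con.mk'_surjective u
  exact ⟨w.toList, (mk'_eq_prod_map w).symm⟩

def letters : TraceMonoid A I →* Multiplicative (Multiset A) :=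
  (traceCon A I).lift (FreeMonoid.lift fun a => Multiplicative.ofAdd {a}) <| by
    refine (Con.conGen_le ..).2 ?_
    rintro _ _ ⟨a, b, -, rfl, rfl⟩
    simp only [Con.ker_rel, map_mul, FreeMonoid.lift_eval_of, ← ofAdd_add, add_comm]

theorem letters_prod_map (w : List A) :
    letters ((w.map ι).prod) = Multiplicative.ofAdd (w : Multiset A) := by
  induction w with
  | nil => rfl
  | cons a w ih =>
    rw [List.map_cons, List.prod_cons, map_mul, ih]
    exact congrArg Multiplicative.ofAdd (Multiset.singleton_add a w)

theorem mem_of_mem_content {w : List A} {x : A} (hx : x ∈ content A I (w.map ι).prod) :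
    x ∈ w := by
  obtain ⟨w', hw', hx⟩ := hx
  have := congrArg (Multiplicative.toAdd ∘ letters) hw'
  simp only [Function.comp, mk'_eq_prod_map, letters_prod_map, toAdd_ofAdd,
    Multiset.coe_eq_coe] at this
  exact this.mem_iff.1 hx

theorem prod_map_eq_mul_of_forall_rel {pre suf : List A} {c : A} (h : ∀ c' ∈ pre, I c c') :
    ((pre ++ c :: suf).map ι).prod = ι c * ((pre ++ suf).map ι).prod := by
  have hc : Commute (pre.map ι).prod (ι c) :=
    Commute.list_prod_left _ _ fun _ hy => by
      obtain ⟨c', hc', rfl⟩ := List.mem_map.1 hy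
      exact (commute_traceOf (h c' hc')).symm
  simp only [List.map_append, List.map_cons, List.prod_append, List.prod_cons, ← mul_assoc,
    hc.eq]

theorem pairwise_commute_of_isClique {B : Finset A} (hB : IsClique A I B) :
    (B.toList.map ι).Pairwise Commute :=
  List.pairwise_map.2 <| B.nodup_toList.pairwise_of_forall_ne fun a ha b hb hab =>
    commute_traceOf (hB.2 a (by simpa using ha) b (by simpa using hb) hab)

theorem isClique_insert (hsym : Symmetric I) {B : Finset A} {x : A} (hB : IsClique A I B)
    (hx : ∀ b ∈ B, I x b) : IsClique A I (insert x B) := by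
  refine ⟨Finset.insert_nonempty x B, fun a ha b hb hab => ?_⟩
  rcases Finset.mem_insert.1 ha with ha | ha <;> rcases Finset.mem_insert.1 hb with hb | hb
  · exact absurd (ha.trans hb.symm) hab
  · exact ha ▸ hx b hb
  · exact hb ▸ hsym (hx a ha)
  · exact hB.2 a ha b hb hab

theorem commute_traceOf_wB {B : Finset A} {x : A} (hx : ∀ b ∈ B, I x b) :
    Commute (ι x) (wB A I B) :=
  Commute.list_prod_right _ _ fun _ hy => by
    obtain ⟨b, hb, rfl⟩ := List.mem_map.1 hy
    exact commute_traceOf (hx b (by simpa using hb))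

theorem wB_insert (hsym : Symmetric I) (hirr : Irreflexive I) {B : Finset A} {x : A}
    (hB : IsClique A I B) (hx : ∀ b ∈ B, I x b) : wB A I (insert x B) = wB A I B * ι x := by
  have hperm := (Finset.toList_insert fun hxB => hirr x (hx x hxB)).map ι
  rw [wB, hperm.prod_eq' (pairwise_commute_of_isClique (isClique_insert hsym hB hx)),
    List.map_cons, List.prod_cons, ← wB, (commute_traceOf_wB hx).eq]

theorem wProd_reverse_cons (B : Finset A) (R : List (Finset A)) :
    wProd A I (B :: R).reverse = wProd A I R.reverse * wB A I B := by
  simp [wProd]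

theorem card_letters_wB (B : Finset A) : Multiset.card (letters (wB A I B)).toAdd = B.card := by
  rw [wB, letters_prod_map, toAdd_ofAdd, Multiset.coe_card, Finset.length_toList]

theorem length_le_card_letters {F : List (Finset A)} (hF : ∀ B ∈ F, B.Nonempty) :
    F.length ≤ Multiset.card (letters (wProd A I F)).toAdd := by
  induction F with
  | nil => simp
  | cons B F ih =>
    have hB := (hF B List.mem_cons_self).card_pos
    have := ih fun C hC => hF C (List.mem_cons_of_mem B hC)
    simp only [wProd, List.map_cons, List.prod_cons, map_mul, toAdd_mul, Multiset.card_add,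
      List.length_cons] at this ⊢
    rw [card_letters_wB]
    omega

def DependsOn (I : A → A → Prop) (x : A) (B : Finset A) : Prop := ∃ b ∈ B, ¬ I x b

theorem DependsOn.mono {x : A} {B C : Finset A} (h : DependsOn I x B) (hBC : B ⊆ C) :
    DependsOn I x C :=
  let ⟨b, hb, hxb⟩ := h; ⟨b, hBC hb, hxb⟩

theorem not_dependsOn {x : A} {B : Finset A} : ¬ DependsOn I x B ↔ ∀ b ∈ B, I x b := by
  simp [DependsOn]

/-- Foata chains are handled top block first: `B :: R` has `B` above the blocks of `R`. -/
def IsRevFoataChain (I : A → A → Prop) (R : List (Finset A)) : Prop :=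
  (∀ B ∈ R, IsClique A I B) ∧ R.IsChain fun B C => ∀ a ∈ B, DependsOn I a C

theorem isFoataChain_iff {L : List (Finset A)} :
    IsFoataChain A I L ↔
      (∀ B ∈ L, IsClique A I B) ∧ L.IsChain fun B C => ∀ a ∈ C, DependsOn I a B := by
  rw [IsFoataChain, List.isChain_iff_getElem]
  rfl

theorem isFoataChain_reverse {R : List (Finset A)} (hR : IsRevFoataChain I R) :
    IsFoataChain A I R.reverse :=
  isFoataChain_iff.2 ⟨fun B hB => hR.1 B (List.mem_reverse.1 hB), List.isChain_reverse.2 hR.2⟩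

/-- The letter `x` joins the block just above the highest block it depends on. -/
noncomputable def insertLetter (I : A → A → Prop) (x : A) : List (Finset A) → List (Finset A)
  | [] => [{x}]
  | B :: R =>
    if DependsOn I x B then {x} :: B :: R
    else if ∀ C ∈ R.head?, DependsOn I x C then insert x B :: R
    else B :: insertLetter I x R

theorem length_le_insertLetter (x : A) (R : List (Finset A)) :
    R.length ≤ (insertLetter I x R).length := by
  induction R with
  | nil => simp
  | cons B R ih => unfold insertLetter; split_ifs <;> simp [ih]

theorem insertLetter_cons_of_not_dependsOn {x : A} {C : Finset A} (R : List (Finset A))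
    (h : ¬ DependsOn I x C) : ∃ C' R', insertLetter I x (C :: R) = C' :: R' ∧ C ⊆ C' := by
  unfold insertLetter
  rw [if_neg h]
  split_ifs
  exacts [⟨_, _, rfl, Finset.subset_insert x C⟩, ⟨_, _, rfl, subset_rfl⟩]

theorem isRevFoataChain_insertLetter (hsym : Symmetric I) (x : A) {R : List (Finset A)}
    (hR : IsRevFoataChain I R) : IsRevFoataChain I (insertLetter I x R) := by
  have hx : IsClique A I {x} := ⟨Finset.singleton_nonempty x, by simp⟩
  induction R with
  | nil => exact ⟨by simpa [insertLetter] using hx, List.isChain_singleton _⟩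
  | cons B R ih =>
    obtain ⟨hcl, hch⟩ := hR
    rw [List.forall_mem_cons] at hcl
    rw [List.isChain_cons] at hch
    unfold insertLetter
    split_ifs with hB hR
    · exact ⟨List.forall_mem_cons.2 ⟨hx, List.forall_mem_cons.2 hcl⟩,
        List.isChain_cons.2 ⟨by simpa using hB, List.isChain_cons.2 hch⟩⟩
    · refine ⟨List.forall_mem_cons.2
        ⟨isClique_insert hsym hcl.1 (not_dependsOn.1 hB), hcl.2⟩,
        List.isChain_cons.2 ⟨fun C hC a ha => ?_, hch.2⟩⟩
      rcases Finset.mem_insert.1 ha with rfl | ha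
      exacts [hR C hC, hch.1 C hC a ha]
    · obtain ⟨C, hC, hxC⟩ : ∃ C ∈ R.head?, ¬ DependsOn I x C := by simpa using hR
      obtain ⟨R', rfl⟩ : ∃ R', R = C :: R' := by cases R <;> simp_all
      obtain ⟨C', R'', heq, hCC'⟩ := insertLetter_cons_of_not_dependsOn R' hxC
      have ih' := ih ⟨hcl.2, hch.2⟩
      refine ⟨List.forall_mem_cons.2 ⟨hcl.1, ih'.1⟩, List.isChain_cons.2 ⟨?_, ih'.2⟩⟩
      rw [heq]
      intro D hD a ha
      rw [List.head?_cons, Option.mem_some_iff] at hD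
      exact hD ▸ (hch.1 C rfl a ha).mono hCC'

theorem wProd_insertLetter (hsym : Symmetric I) (hirr : Irreflexive I) (x : A)
    {R : List (Finset A)} (hR : ∀ B ∈ R, IsClique A I B) :
    wProd A I (insertLetter I x R).reverse = wProd A I R.reverse * ι x := by
  induction R with
  | nil => simp [insertLetter, wProd, wB]
  | cons B R ih =>
    unfold insertLetter
    split_ifs with hB
    · rw [wProd_reverse_cons]
      simp [wB]
    · rw [wProd_reverse_cons, wProd_reverse_cons,
        wB_insert hsym hirr (hR B List.mem_cons_self) (not_dependsOn.1 hB), mul_assoc]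
    · rw [wProd_reverse_cons, wProd_reverse_cons, ih fun C hC => hR C (List.mem_cons_of_mem B hC),
        mul_assoc, (commute_traceOf_wB (not_dependsOn.1 hB)).eq, mul_assoc]

/-- `x` lies in a block at level `≥ m`, the bottom block being at level `0`. -/
def MemAbove (R : List (Finset A)) (m : ℕ) (x : A) : Prop := ∃ B ∈ R.reverse.drop m, x ∈ B

theorem memAbove_nil {m : ℕ} {x : A} : ¬ MemAbove [] m x := by simp [MemAbove]

theorem memAbove_cons {B : Finset A} {R : List (Finset A)} {m : ℕ} {x : A} :
    MemAbove (B :: R) m x ↔ m ≤ R.length ∧ x ∈ B ∨ MemAbove R m x := by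
  simp only [MemAbove, List.reverse_cons, List.drop_append, List.length_reverse, List.mem_append]
  by_cases h : m ≤ R.length
  · simp only [Nat.sub_eq_zero_of_le h, List.drop_zero, List.mem_singleton]
    aesop
  · rw [List.drop_of_length_le (l := [B]) (by simp only [List.length_singleton]; omega)]
    simp [h]

theorem MemAbove.lt_length {R : List (Finset A)} {m : ℕ} {x : A} (h : MemAbove R m x) :
    m < R.length := by
  obtain ⟨B, hB, -⟩ := h
  simpa using List.length_pos_of_mem hB

theorem MemAbove.mono {R : List (Finset A)} {m n : ℕ} {x : A} (h : MemAbove R n x) (hmn : m ≤ n) :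
    MemAbove R m x :=
  let ⟨B, hB, hx⟩ := h; ⟨B, (R.reverse.drop_sublist_drop_left hmn).subset hB, hx⟩

theorem take_reverse_cons {B : Finset A} {R : List (Finset A)} {m : ℕ} (h : m ≤ R.length) :
    (B :: R).reverse.take m = R.reverse.take m := by
  rw [List.reverse_cons, List.take_append_of_le_length (by simpa using h)]

theorem MemAbove.insertLetter {R : List (Finset A)} {m : ℕ} {y : A} (h : MemAbove R m y)
    (x : A) : MemAbove (insertLetter I x R) m y := by
  induction R with
  | nil => exact absurd h memAbove_nil
  | cons B R ih =>
    unfold TraceMonoid.insertLetter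
    split_ifs
    · exact memAbove_cons.2 (Or.inr h)
    · rcases memAbove_cons.1 h with ⟨hm, hy⟩ | h
      exacts [memAbove_cons.2 (Or.inl ⟨hm, Finset.mem_insert_of_mem hy⟩),
        memAbove_cons.2 (Or.inr h)]
    · rcases memAbove_cons.1 h with ⟨hm, hy⟩ | h
      · exact memAbove_cons.2 (Or.inl ⟨hm.trans (length_le_insertLetter x R), hy⟩)
      · exact memAbove_cons.2 (Or.inr (ih h))

theorem memAbove_insertLetter_self (x : A) (R : List (Finset A)) :
    MemAbove (insertLetter I x R) 0 x := by
  induction R with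
  | nil => simp [insertLetter, memAbove_cons]
  | cons B R ih =>
    unfold insertLetter
    split_ifs <;> simp [memAbove_cons, ih]

theorem insertLetter_above {R : List (Finset A)} {m : ℕ} {x y : A} (hy : MemAbove R m y)
    (hxy : ¬ I x y) :
    MemAbove (insertLetter I x R) (m + 1) x ∧
      (insertLetter I x R).reverse.take (m + 1) = R.reverse.take (m + 1) := by
  induction R with
  | nil => exact absurd hy memAbove_nil
  | cons B R ih =>
    have hlt := hy.lt_length
    unfold insertLetter
    split_ifs with hB
    · exact ⟨memAbove_cons.2 (Or.inl ⟨hlt, Finset.mem_singleton_self x⟩), take_reverse_cons hlt⟩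
    all_goals
      replace hy := (memAbove_cons.1 hy).resolve_left fun h => hxy (not_dependsOn.1 hB y h.2)
    · have hlt := hy.lt_length
      exact ⟨memAbove_cons.2 (Or.inl ⟨hlt, Finset.mem_insert_self x B⟩),
        by rw [take_reverse_cons hlt, take_reverse_cons hlt]⟩
    · obtain ⟨hx, htake⟩ := ih hy
      exact ⟨memAbove_cons.2 (Or.inr hx), by
        rw [take_reverse_cons hx.lt_length.le, take_reverse_cons hy.lt_length, htake]⟩

noncomputable def insertWord (I : A → A → Prop) (R : List (Finset A)) (w : List A) :
    List (Finset A) :=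
  w.foldl (fun R x => insertLetter I x R) R

theorem insertWord_cons (R : List (Finset A)) (x : A) (w : List A) :
    insertWord I R (x :: w) = insertWord I (insertLetter I x R) w := rfl

theorem insertWord_append (R : List (Finset A)) (w₁ w₂ : List A) :
    insertWord I R (w₁ ++ w₂) = insertWord I (insertWord I R w₁) w₂ := List.foldl_append

theorem isRevFoataChain_insertWord (hsym : Symmetric I) {R : List (Finset A)}
    (hR : IsRevFoataChain I R) (w : List A) : IsRevFoataChain I (insertWord I R w) := by
  induction w generalizing R with
  | nil => exact hR
  | cons x w ih => exact ih (isRevFoataChain_insertLetter hsym x hR)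

theorem wProd_insertWord (hsym : Symmetric I) (hirr : Irreflexive I) {R : List (Finset A)}
    (hR : IsRevFoataChain I R) (w : List A) :
    wProd A I (insertWord I R w).reverse = wProd A I R.reverse * (w.map ι).prod := by
  induction w generalizing R with
  | nil => simp [insertWord]
  | cons x w ih =>
    rw [insertWord_cons, ih (isRevFoataChain_insertLetter hsym x hR),
      wProd_insertLetter hsym hirr x hR.1, List.map_cons, List.prod_cons, mul_assoc]

theorem MemAbove.insertWord {R : List (Finset A)} {m : ℕ} {y : A} (h : MemAbove R m y)
    (w : List A) : MemAbove (insertWord I R w) m y := by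
  induction w generalizing R with
  | nil => exact h
  | cons x w ih => exact ih (h.insertLetter x)

theorem memAbove_insertWord_self (R : List (Finset A)) {w : List A} {c : A} (hc : c ∈ w) :
    MemAbove (insertWord I R w) 0 c := by
  induction w generalizing R with
  | nil => simp at hc
  | cons x w ih =>
    rcases List.mem_cons.1 hc with rfl | hc
    exacts [(memAbove_insertLetter_self c R).insertWord w, ih _ hc]

theorem insertWord_above {R : List (Finset A)} {m : ℕ} {w : List A}
    (hw : ∀ pre c suf, w = pre ++ c :: suf →
      (∃ c' ∈ pre, ¬ I c c') ∨ ∃ y, MemAbove R m y ∧ ¬ I c y) :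
    (∀ c ∈ w, MemAbove (insertWord I R w) (m + 1) c) ∧
      (insertWord I R w).reverse.take (m + 1) = R.reverse.take (m + 1) := by
  induction w generalizing R with
  | nil => exact ⟨by simp, rfl⟩
  | cons x w ih =>
    obtain ⟨y, hy, hxy⟩ : ∃ y, MemAbove R m y ∧ ¬ I x y := by simpa using hw [] x w rfl
    obtain ⟨hx, htake⟩ := insertLetter_above hy hxy
    have hw' : ∀ pre c suf, w = pre ++ c :: suf →
        (∃ c' ∈ pre, ¬ I c c') ∨ ∃ y, MemAbove (insertLetter I x R) m y ∧ ¬ I c y := by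
      intro pre c suf h
      rcases hw (x :: pre) c suf (by rw [h, List.cons_append]) with ⟨c', hc', hcc'⟩ | ⟨y, hy, hcy⟩
      · rcases List.mem_cons.1 hc' with rfl | hc'
        exacts [Or.inr ⟨c', hx.mono m.le_succ, hcc'⟩, Or.inl ⟨c', hc', hcc'⟩]
      · exact Or.inr ⟨y, hy.insertLetter x, hcy⟩
    obtain ⟨hw, htake'⟩ := ih hw'
    refine ⟨fun c hc => ?_, htake'.trans htake⟩
    rcases List.mem_cons.1 hc with rfl | hc
    exacts [hx.insertWord w, hw c hc]

theorem insertWord_flatMap_above {α : Type*} {R : List (Finset A)} {m : ℕ} {l : List α}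
    {τ : α → List A}
    (h : ∀ a ∈ l, ∀ pre c suf, τ a = pre ++ c :: suf →
      (∃ c' ∈ pre, ¬ I c c') ∨ ∃ y, MemAbove R m y ∧ ¬ I c y) :
    (∀ c ∈ l.flatMap τ, MemAbove (insertWord I R (l.flatMap τ)) (m + 1) c) ∧
      (insertWord I R (l.flatMap τ)).reverse.take (m + 1) = R.reverse.take (m + 1) := by
  induction l generalizing R with
  | nil => exact ⟨by simp, rfl⟩
  | cons a l ih =>
    rw [List.flatMap_cons, insertWord_append]
    obtain ⟨ha, htake⟩ := insertWord_above (h a List.mem_cons_self)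
    obtain ⟨hl, htake'⟩ := ih fun a' ha' pre c suf hs =>
      (h a' (List.mem_cons_of_mem a ha') pre c suf hs).imp_right
        fun ⟨y, hy, hcy⟩ => ⟨y, hy.insertWord _, hcy⟩
    refine ⟨fun c hc => ?_, htake'.trans htake⟩
    rcases List.mem_append.1 hc with hc | hc
    exacts [(ha c hc).insertWord _, hl c hc]

/-- A letter of `σ a` commuting with every letter before it can be moved to the front of the
trace `σ a` represents. -/
def FirstLettersDepend (I : A → A → Prop) (σ : A → List A) : Prop :=
  ∀ a b, ¬ I a b → ∀ pre c suf, σ a = pre ++ c :: suf →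
    (∃ c' ∈ pre, ¬ I c c') ∨ ∃ x ∈ σ b, ¬ I c x

noncomputable def blockWord (σ : A → List A) (B : Finset A) : List A := B.toList.flatMap σ

variable {σ : A → List A}

theorem insertWord_blockWord_above (hσ : FirstLettersDepend I σ) {B C : Finset A}
    {R : List (Finset A)} {m : ℕ} (hBC : ∀ a ∈ C, DependsOn I a B)
    (hB : ∀ c ∈ blockWord σ B, MemAbove R m c) :
    (∀ c ∈ blockWord σ C, MemAbove (insertWord I R (blockWord σ C)) (m + 1) c) ∧
      (insertWord I R (blockWord σ C)).reverse.take (m + 1) = R.reverse.take (m + 1) :=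
  insertWord_flatMap_above fun a ha pre c suf hs => by
    obtain ⟨b, hb, hab⟩ := hBC a (Finset.mem_toList.1 ha)
    exact (hσ a b hab pre c suf hs).imp_right fun ⟨x, hx, hcx⟩ =>
      ⟨x, hB x (List.mem_flatMap.2 ⟨b, Finset.mem_toList.2 hb, hx⟩), hcx⟩

theorem blockWord_eq_nil (hσ : FirstLettersDepend I σ) {B C : Finset A}
    (hBC : ∀ a ∈ C, DependsOn I a B) (hB : blockWord σ B = []) : blockWord σ C = [] := by
  refine List.eq_nil_iff_forall_not_mem.2 fun c hc => ?_
  obtain ⟨a, ha, hc⟩ := List.mem_flatMap.1 hc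
  obtain ⟨b, hb, hab⟩ := hBC a (Finset.mem_toList.1 ha)
  obtain ⟨c₀, suf, hσa⟩ := List.exists_cons_of_ne_nil (List.ne_nil_of_mem hc)
  obtain ⟨x, hx, -⟩ := (hσ a b hab [] c₀ suf hσa).resolve_left (by simp)
  have : x ∈ blockWord σ B := List.mem_flatMap.2 ⟨b, Finset.mem_toList.2 hb, hx⟩
  simp [hB] at this

theorem insertWord_stages (hσ : FirstLettersDepend I σ) {Ls : List (Finset A)} {B : Finset A}
    {R : List (Finset A)} {m : ℕ}
    (hchain : (B :: Ls).IsChain fun B C => ∀ a ∈ C, DependsOn I a B)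
    (hB : ∀ c ∈ blockWord σ B, MemAbove R m c) :
    (insertWord I R (Ls.flatMap (blockWord σ))).reverse.take (m + 1) = R.reverse.take (m + 1) ∧
      (insertWord I R (Ls.flatMap (blockWord σ)) = R ∨ m + 1 ≤ R.length) := by
  induction Ls generalizing B R m with
  | nil => exact ⟨rfl, Or.inl rfl⟩
  | cons C Ls ih =>
    obtain ⟨hBC, hchain⟩ := List.isChain_cons_cons.1 hchain
    obtain ⟨hC, htakeC⟩ := insertWord_blockWord_above hσ hBC hB
    rw [List.flatMap_cons, insertWord_append]
    obtain ⟨htake, -⟩ := ih hchain hC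
    refine ⟨?_, ?_⟩
    · have h := congrArg (List.take (m + 1)) htake
      rwa [List.take_take, List.take_take, min_eq_left (by omega), htakeC] at h
    · by_cases hBe : blockWord σ B = []
      · have hCe := blockWord_eq_nil hσ hBC hBe
        obtain ⟨-, h | h⟩ := ih hchain (m := m + 1) (R := R) (by simp [hCe])
        · exact Or.inl (by simpa [hCe, insertWord] using h)
        · exact Or.inr (by omega)
      · obtain ⟨c, hc⟩ := List.exists_mem_of_ne_nil _ hBe
        exact Or.inr (hB c hc).lt_length

theorem memAbove_insertWord_take (hσ : FirstLettersDepend I σ) {L : List (Finset A)}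
    (hL : L.IsChain fun B C => ∀ a ∈ C, DependsOn I a B) {k : ℕ} (hk : k < L.length) :
    ∀ c ∈ blockWord σ L[k],
      MemAbove (insertWord I [] ((L.take (k + 1)).flatMap (blockWord σ))) k c := by
  induction k with
  | zero =>
    intro c hc
    simpa [List.take_one, List.head?_eq_getElem? ▸ List.getElem?_eq_getElem hk] using
      memAbove_insertWord_self [] hc
  | succ k ih =>
    rw [List.take_succ_eq_append_getElem hk, List.flatMap_append, insertWord_append,
      List.flatMap_singleton]
    exact (insertWord_blockWord_above hσ (List.isChain_iff_getElem.1 hL k hk) (ih (by omega))).1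

theorem insertWord_flatMap_take (hσ : FirstLettersDepend I σ) {L : List (Finset A)}
    (hL : L.IsChain fun B C => ∀ a ∈ C, DependsOn I a B) {k : ℕ} (hk : k ≤ L.length) :
    (insertWord I [] (L.flatMap (blockWord σ))).reverse.take k =
        (insertWord I [] ((L.take k).flatMap (blockWord σ))).reverse.take k ∧
      (insertWord I [] (L.flatMap (blockWord σ)) =
          insertWord I [] ((L.take k).flatMap (blockWord σ)) ∨
        k ≤ (insertWord I [] ((L.take k).flatMap (blockWord σ))).length) := by
  cases k with
  | zero => simp
  | succ j =>
    have hchain : (L[j] :: L.drop (j + 1)).IsChain fun B C => ∀ a ∈ C, DependsOn I a B :=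
      List.drop_eq_getElem_cons hk ▸ hL.drop j
    rw [← List.take_append_drop (j + 1) L, List.flatMap_append, insertWord_append,
      List.take_append_drop]
    exact insertWord_stages hσ hchain (memAbove_insertWord_take hσ hL hk)

theorem firstLettersDepend_of_prod_map_eq {φ : Monoid.End (TraceMonoid A I)} (hsym : Symmetric I)
    (hcond : ∀ a b c : A, (∃ w : TraceMonoid A I, φ (ι b) = ι c * w) →
      (∀ x ∈ content A I (φ (ι a)), I c x) → I a b)
    (hσ : ∀ a, ((σ a).map ι).prod = φ (ι a)) : FirstLettersDepend I σ := by
  intro a b hab pre c suf hs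
  by_contra! h
  have hfirst : φ (ι a) = ι c * ((pre ++ suf).map ι).prod := by
    rw [← hσ, hs, prod_map_eq_mul_of_forall_rel h.1]
  have hc : ∀ x ∈ content A I (φ (ι b)), I c x := fun x hx =>
    h.2 x (mem_of_mem_content (by rwa [← hσ] at hx))
  exact hab (hsym (hcond b a c ⟨_, hfirst⟩ hc))

theorem prod_map_flatMap_blockWord {φ : Monoid.End (TraceMonoid A I)}
    (hσ : ∀ a, ((σ a).map ι).prod = φ (ι a)) (L : List (Finset A)) :
    ((L.flatMap (blockWord σ)).map ι).prod = φ (wProd A I L) := by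
  have hword (l : List A) : ((l.flatMap σ).map ι).prod = φ ((l.map ι).prod) := by
    induction l with
    | nil => simp
    | cons a l ih => simp [List.flatMap_cons, ih, hσ]
  induction L with
  | nil => simp [wProd]
  | cons B L ih => simp [List.flatMap_cons, blockWord, hword, ih, wProd, wB]

theorem isFNF_insertWord (hsym : Symmetric I) (hirr : Irreflexive I)
    {φ : Monoid.End (TraceMonoid A I)} (hσ : ∀ a, ((σ a).map ι).prod = φ (ι a))
    (L : List (Finset A)) :
    IsFNF A I (insertWord I [] (L.flatMap (blockWord σ))).reverse (φ (wProd A I L)) := by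
  have hnil : IsRevFoataChain I [] := ⟨by simp, List.isChain_nil⟩
  refine ⟨isFoataChain_reverse (isRevFoataChain_insertWord hsym hnil _), ?_⟩
  rw [wProd_insertWord hsym hirr hnil, prod_map_flatMap_blockWord hσ]
  simp [wProd]

theorem le_rE_of_isFNF {u v : TraceMonoid A I} {P Lu Lv : List (Finset A)}
    (hu : IsFNF A I (P ++ Lu) u) (hv : IsFNF A I (P ++ Lv) v) :
    (P.length : ℕ∞) ≤ rE A I u v := by
  unfold rE
  split_ifs
  · exact le_top
  refine Nat.cast_le.2 (le_csSup ⟨Multiset.card (letters u).toAdd, ?_⟩ ⟨P, Lu, Lv, rfl, hu, hv⟩)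
  rintro _ ⟨P', Lu', -, rfl, hu', -⟩
  have := length_le_card_letters (I := I) fun B hB => (hu'.1.1 B hB).1
  rw [← hu'.2, List.length_append] at this
  omega

end TraceMonoid

open TraceMonoid in
theorem r_apply_prefix_ge_general (A : Type) (I : A → A → Prop)
    (hsym : Symmetric I) (hirr : Irreflexive I)
    (φ : Monoid.End (TraceMonoid A I))
    (hcond : ∀ a b c : A, (∃ w : TraceMonoid A I, φ (traceOf A I b) = traceOf A I c * w) →
      (∀ x ∈ content A I (φ (traceOf A I a)), I c x) → I a b) :
    ∀ (L : List (Finset A)) (u : TraceMonoid A I) (k : ℕ),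
      IsFNF A I L u → k ≤ L.length →
        (k : ℕ∞) ≤ rE A I (φ (wProd A I (L.take k))) (φ u) := by
  rintro L u k ⟨hL, rfl⟩ hk
  choose σ hσ using fun a => exists_prod_map_eq (φ (traceOf A I a))
  have hfnf := isFNF_insertWord hsym hirr hσ
  obtain ⟨htake, heq | hlen⟩ :=
    insertWord_flatMap_take (firstLettersDepend_of_prod_map_eq hsym hcond hσ)
      (isFoataChain_iff.1 hL).2 hk
  · rw [(hfnf L).2, (hfnf (L.take k)).2, heq, rE, if_pos rfl]
    exact le_top
  · set R := insertWord I [] ((L.take k).flatMap (blockWord σ))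
    have := le_rE_of_isFNF (P := R.reverse.take k)
      (by rw [List.take_append_drop]; exact hfnf (L.take k))
      (by rw [← htake, List.take_append_drop]; exact hfnf L)
    rwa [List.length_take, List.length_reverse, min_eq_left hlen] at this

/-- If an endomorphism `φ` of `M(A,I)` satisfies: for all letters `a,b,c`, `c` a prefix
of `φ(b)` and `c ∼_I φ(a)` imply `(a,b) ∈ I`, and `w_{B₁}⋯w_{B_p}` is a Foata normal
form, then for every `k ≤ p` we have `r(φ(w_{B₁}⋯w_{B_k}), φ(w_{B₁}⋯w_{B_p})) ≥ k`. -/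
theorem r_apply_prefix_ge (A : Type) [Fintype A] (I : A → A → Prop)
    (hsym : Symmetric I) (hirr : Irreflexive I)
    (φ : Monoid.End (TraceMonoid A I))
    (hcond : ∀ a b c : A, (∃ w : TraceMonoid A I, φ (traceOf A I b) = traceOf A I c * w) →
      (∀ x ∈ content A I (φ (traceOf A I a)), I c x) → I a b) :
    ∀ (L : List (Finset A)) (u : TraceMonoid A I) (k : ℕ),
      IsFNF A I L u → k ≤ L.length →
        (k : ℕ∞) ≤ rE A I (φ (wProd A I (L.take k))) (φ u) :=
  r_apply_prefix_ge_general A I hsym hirr φ hcond
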